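/- Let 0 < a < b, M ≥ 0, and let f : [a,b] → ℝ be M-Lipschitz. Then for all λ ∈ [0,1], | (1-λ) f(√(ab)) + λ (f(a) + f(b))/2 - (1/(ln b - ln a)) ∫_a^b f(t)/t dt | ≤ [M/(ln b - ln a)] [ (λ(b-a)/2) ln(b/a) + (1-2λ)(a + b - 2√(ab)) ]. -/

import Mathlib

/-!
Split `[a, b]` at the geometric mean `s = √(ab)`, which cuts the measure `dt / t` into two
halves of mass `(log b - log a) / 2`. On each half, subtract from `f t` the weighted average of
`f` at the two endpoints: the Lipschitz bound controls the difference by a function linear in `t`,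
and linear functions integrate explicitly against `dt / t`.
-/

open Real Set intervalIntegral
open scoped NNReal

theorem pos_of_mem_uIcc {u v t : ℝ} (hu : 0 < u) (hv : 0 < v) (ht : t ∈ uIcc u v) : 0 < t :=
  (lt_min hu hv).trans_le ht.1

theorem ContinuousOn.intervalIntegrable_div_self {g : ℝ → ℝ} {u v : ℝ} (hu : 0 < u) (hv : 0 < v)
    (hg : ContinuousOn g (uIcc u v)) :
    IntervalIntegrable (fun t => g t / t) MeasureTheory.volume u v :=
  (hg.div continuousOn_id fun _ ht => (pos_of_mem_uIcc hu hv ht).ne').intervalIntegrable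

theorem integral_const_div_self {u v : ℝ} (hu : 0 < u) (hv : 0 < v) (c : ℝ) :
    ∫ t in u..v, c / t = c * log (v / u) := by
  simp only [div_eq_mul_inv c, intervalIntegral.integral_const_mul, integral_inv_of_pos hu hv]

theorem integral_linear_div_self {u v : ℝ} (hu : 0 < u) (hv : 0 < v) (p q : ℝ) :
    ∫ t in u..v, (p * t + q) / t = p * (v - u) + q * log (v / u) := by
  rw [integral_congr (g := fun t => p + q / t) fun t ht => by
      field_simp [(pos_of_mem_uIcc hu hv ht).ne']]
  rw [integral_add intervalIntegrable_const
      (continuousOn_const.intervalIntegrable_div_self hu hv),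
    intervalIntegral.integral_const, integral_const_div_self hu hv, smul_eq_mul]
  ring

theorem integral_const_sub_div_self {f : ℝ → ℝ} {u v : ℝ} (hu : 0 < u) (hv : 0 < v) (c : ℝ)
    (hf : IntervalIntegrable (fun t => f t / t) MeasureTheory.volume u v) :
    ∫ t in u..v, (c - f t) / t = c * log (v / u) - ∫ t in u..v, f t / t := by
  simp only [sub_div]
  rw [integral_sub (continuousOn_const.intervalIntegrable_div_self hu hv) hf,
    integral_const_div_self hu hv]

theorem abs_integral_div_self_le {F : ℝ → ℝ} {u v : ℝ} (hu : 0 < u) (huv : u ≤ v) {p q : ℝ}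
    (hF : ∀ t ∈ Icc u v, |F t| ≤ p * t + q) :
    |∫ t in u..v, F t / t| ≤ p * (v - u) + q * log (v / u) := by
  have hv := hu.trans_le huv
  rw [← integral_linear_div_self hu hv, ← norm_eq_abs]
  refine norm_integral_le_of_norm_le huv (Filter.Eventually.of_forall fun t ht => ?_)
    (ContinuousOn.intervalIntegrable_div_self (g := fun t => p * t + q) hu hv (by fun_prop))
  have ht0 : 0 < t := hu.trans ht.1
  rw [norm_div, norm_eq_abs, norm_eq_abs, abs_of_pos ht0]
  exact div_le_div_of_nonneg_right (hF t (Ioc_subset_Icc_self ht)) ht0.le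

theorem LipschitzOnWith.abs_lineMap_sub_le {f : ℝ → ℝ} {K : ℝ≥0} {s : Set ℝ}
    (hf : LipschitzOnWith K f s) {μ : ℝ} (hμ₀ : 0 ≤ μ) (hμ₁ : μ ≤ 1) {x y t : ℝ}
    (hx : x ∈ s) (hy : y ∈ s) (ht : t ∈ s) :
    |(1 - μ) * f x + μ * f y - f t| ≤ K * ((1 - μ) * |x - t| + μ * |y - t|) := by
  have hxt : |f x - f t| ≤ K * |x - t| := by simpa only [Real.dist_eq] using hf.dist_le_mul x hx t ht
  have hyt : |f y - f t| ≤ K * |y - t| := by simpa only [Real.dist_eq] using hf.dist_le_mul y hy t ht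
  calc |(1 - μ) * f x + μ * f y - f t|
      = |(1 - μ) * (f x - f t) + μ * (f y - f t)| := by ring_nf
    _ ≤ (1 - μ) * |f x - f t| + μ * |f y - f t| := by
        refine (abs_add_le _ _).trans_eq ?_
        rw [abs_mul, abs_mul, abs_of_nonneg (sub_nonneg.2 hμ₁), abs_of_nonneg hμ₀]
    _ ≤ (1 - μ) * (K * |x - t|) + μ * (K * |y - t|) := by gcongr
    _ = K * ((1 - μ) * |x - t| + μ * |y - t|) := by ring

theorem LipschitzOnWith.abs_integral_lineMap_sub_div_self_le {f : ℝ → ℝ} {K : ℝ≥0} {u v : ℝ}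
    (hf : LipschitzOnWith K f (Icc u v)) (hu : 0 < u) (huv : u ≤ v) {μ : ℝ} (hμ₀ : 0 ≤ μ)
    (hμ₁ : μ ≤ 1) :
    |∫ t in u..v, ((1 - μ) * f u + μ * f v - f t) / t|
      ≤ K * ((1 - 2 * μ) * (v - u) + (μ * v - (1 - μ) * u) * log (v / u)) := by
  rw [mul_add, ← mul_assoc, ← mul_assoc]
  refine abs_integral_div_self_le hu huv fun t ht => ?_
  refine (hf.abs_lineMap_sub_le hμ₀ hμ₁ (left_mem_Icc.2 huv) (right_mem_Icc.2 huv) ht).trans_eq ?_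
  rw [abs_of_nonpos (by linarith [ht.1]), abs_of_nonneg (by linarith [ht.2])]
  ring

theorem Real.lt_sqrt_mul_of_lt {a b : ℝ} (ha : 0 < a) (hab : a < b) : a < √(a * b) :=
  (Real.lt_sqrt ha.le).2 (by nlinarith)

theorem Real.sqrt_mul_lt_of_lt {a b : ℝ} (ha : 0 < a) (hab : a < b) : √(a * b) < b :=
  (Real.sqrt_lt' (ha.trans hab)).2 (by nlinarith)

theorem Real.log_sqrt_mul_div_left {a b : ℝ} (ha : 0 < a) (hb : 0 < b) :
    log (√(a * b) / a) = (log b - log a) / 2 := by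
  rw [log_div (by positivity) ha.ne', log_sqrt (by positivity), log_mul ha.ne' hb.ne']
  ring

theorem Real.log_div_sqrt_mul {a b : ℝ} (ha : 0 < a) (hb : 0 < b) :
    log (b / √(a * b)) = (log b - log a) / 2 := by
  rw [log_div hb.ne' (by positivity), log_sqrt (by positivity), log_mul ha.ne' hb.ne']
  ring

/-- Inequality (3.5): general weighted inequality at x = √(ab) for `M`-Lipschitzian
functions. -/
theorem stmt_12 (a b M : ℝ) (ha : 0 < a) (hab : a < b) (hM : 0 ≤ M)
    (f : ℝ → ℝ)
    (hf : ∀ x ∈ Set.Icc a b, ∀ y ∈ Set.Icc a b, |f x - f y| ≤ M * |x - y|)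
    (lam : ℝ) (hlam : lam ∈ Set.Icc (0 : ℝ) 1) :
    |(1 - lam) * f (Real.sqrt (a * b)) + lam * ((f a + f b) / 2)
      - (1 / (Real.log b - Real.log a)) * ∫ t in a..b, f t / t|
    ≤ M / (Real.log b - Real.log a) *
        (lam * (b - a) / 2 * Real.log (b / a)
          + (1 - 2 * lam) * (a + b - 2 * Real.sqrt (a * b))) := by
  obtain ⟨hl₀, hl₁⟩ := hlam
  have hb := ha.trans hab
  have has := lt_sqrt_mul_of_lt ha hab
  have hsb := sqrt_mul_lt_of_lt ha hab
  have hs := ha.trans has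
  have hL : 0 < log b - log a := sub_pos.2 (log_lt_log ha hab)
  have hlip : LipschitzOnWith M.toNNReal f (Icc a b) := .of_dist_le' fun x hx y hy => by
    simpa only [Real.dist_eq] using hf x hx y hy
  have hint {u v : ℝ} (hu : u ∈ Icc a b) (hv : v ∈ Icc a b) :
      IntervalIntegrable (fun t => f t / t) MeasureTheory.volume u v :=
    (hlip.continuousOn.mono (uIcc_subset_Icc hu hv)).intervalIntegrable_div_self
      (ha.trans_le hu.1) (ha.trans_le hv.1)
  have hleft := (hlip.mono (Icc_subset_Icc_right hsb.le)).abs_integral_lineMap_sub_div_self_le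
    ha has.le (μ := 1 - lam) (by linarith) (by linarith)
  have hright := (hlip.mono (Icc_subset_Icc_left has.le)).abs_integral_lineMap_sub_div_self_le
    hs hsb.le hl₀ hl₁
  rw [integral_const_sub_div_self ha hs _ (hint ⟨le_rfl, hab.le⟩ ⟨has.le, hsb.le⟩),
    log_sqrt_mul_div_left ha hb] at hleft
  rw [integral_const_sub_div_self hs hb _ (hint ⟨has.le, hsb.le⟩ ⟨hab.le, le_rfl⟩),
    log_div_sqrt_mul ha hb] at hright
  rw [← integral_add_adjacent_intervals (hint ⟨le_rfl, hab.le⟩ ⟨has.le, hsb.le⟩)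
    (hint ⟨has.le, hsb.le⟩ ⟨hab.le, le_rfl⟩), log_div hb.ne' ha.ne']
  rw [Real.coe_toNNReal M hM] at hleft hright
  generalize ∫ t in a..√(a * b), f t / t = I₁ at *
  generalize ∫ t in √(a * b)..b, f t / t = I₂ at *
  refine le_of_mul_le_mul_right ?_ hL
  convert (abs_add_le _ _).trans (add_le_add hleft hright) using 1
  · rw [← abs_of_pos hL, ← abs_mul, abs_of_pos hL]
    congr 1
    field_simp
    ring
  · field_simp
    ring
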